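/- Let n ≥ 2 and c ≥ 2n be integers. Then any family F of functions f : {1,…,n} → {1,…,c} such that the images of any two members of F have nonempty intersection satisfies |F| ≤ n·c^{n−1}. -/

import Mathlib

/-!
Group the functions of `F` by their image. The number of functions `Fin n → Fin c` with a given
image depends only on the size of the image, and the images of members of `F` form an
intersecting family of sets of size at most `n ≤ c / 2`. By Erdős–Ko–Rado, each size class of
this family is no larger than the class of sets of that size through a fixed point `x`, so `|F|`
is at most the number of functions whose image contains `x`, which is at most `n * c ^ (n - 1)`.
-/

open Finset

section MapsWithImage

variable {α β : Type*} [Fintype α] [DecidableEq α] [Fintype β] [DecidableEq β]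

theorem card_filter_image_eq_congr {S T : Finset β} (h : #S = #T) :
    #{f : α → β | univ.image f = S} = #{f : α → β | univ.image f = T} := by
  obtain ⟨σ, rfl⟩ := Equiv.Perm.exists_map_finset_eq S T h
  refine card_equiv ((Equiv.refl α).arrowCongr σ) fun f => ?_
  have image_comp : univ.image (σ ∘ f) = (univ.image f).map σ.toEmbedding := by
    rw [map_eq_image, image_image]; rfl
  simp only [mem_filter, mem_univ, true_and]
  change image f univ = S ↔ image (σ ∘ f) univ = _
  rw [image_comp, map_inj]

theorem card_filter_apply_eq (i : α) (b : β) :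
    #{f : α → β | f i = b} = Fintype.card β ^ (Fintype.card α - 1) := by
  simpa using Fintype.card_filter_piFinset_const_eq_of_mem (univ : Finset β) i (mem_univ b)

theorem card_filter_mem_image_le (b : β) :
    #{f : α → β | b ∈ univ.image f} ≤ Fintype.card α * Fintype.card β ^ (Fintype.card α - 1) := by
  have : ({f : α → β | b ∈ univ.image f} : Finset _) = univ.biUnion fun i => {f | f i = b} := by
    ext f; simp
  rw [this]
  refine card_biUnion_le.trans_eq ?_
  simp [card_filter_apply_eq]

theorem card_filter_mem_image_eq_sum (b : β) :
    #{f : α → β | b ∈ univ.image f} = ∑ S with b ∈ S, #{f : α → β | univ.image f = S} := by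
  rw [card_eq_sum_card_fiberwise (f := fun f => univ.image f) (t := {S | b ∈ S})
    fun f hf => by simpa using hf]
  refine sum_congr rfl fun S hS => ?_
  rw [filter_filter]
  exact congrArg card (filter_congr fun f _ =>
    ⟨And.right, fun hf => ⟨hf ▸ (mem_filter.1 hS).2, hf⟩⟩)

end MapsWithImage

theorem card_filter_mem_and_card_eq_succ {β : Type*} [Fintype β] [DecidableEq β] (x : β) (k : ℕ) :
    #{S : Finset β | x ∈ S ∧ #S = k + 1} = (Fintype.card β - 1).choose k := by
  rw [← card_univ, ← card_erase_of_mem (mem_univ x), ← card_powersetCard]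
  refine card_nbij' (·.erase x) (insert x) ?_ ?_ ?_ ?_ <;> intro S hS <;>
    simp_all [mem_powersetCard, subset_erase]

theorem sum_le_sum_filter_mem_of_intersecting {c : ℕ} {𝒜 : Finset (Finset (Fin c))}
    (h𝒜 : (𝒜 : Set (Finset (Fin c))).Intersecting) (h𝒜c : ∀ S ∈ 𝒜, #S ≤ c / 2)
    (w : Finset (Fin c) → ℕ) (hw : ∀ S T, #S = #T → w S = w T) (x : Fin c) :
    ∑ S ∈ 𝒜, w S ≤ ∑ S with x ∈ S, w S := by
  have slice (k : ℕ) : ∑ S ∈ 𝒜 with #S = k, w S ≤ ∑ S with x ∈ S ∧ #S = k, w S := by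
    obtain h | ⟨S₀, hS₀⟩ := (𝒜.filter (#· = k)).eq_empty_or_nonempty
    · simp [h]
    rw [mem_filter] at hS₀
    obtain ⟨r, rfl⟩ : ∃ r, k = r + 1 := Nat.exists_eq_succ_of_ne_zero fun hk =>
      h𝒜.ne_bot hS₀.1 (card_eq_zero.1 (hS₀.2.trans hk))
    rw [sum_congr rfl fun S hS => hw S S₀ ((mem_filter.1 hS).2.trans hS₀.2.symm),
      sum_congr rfl fun S hS => hw S S₀ ((mem_filter.1 hS).2.2.trans hS₀.2.symm),
      sum_const, sum_const, smul_eq_mul, smul_eq_mul]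
    refine Nat.mul_le_mul_right _ ?_
    calc #(𝒜.filter (#· = r + 1)) ≤ (c - 1).choose r :=
          erdos_ko_rado (h𝒜.mono (coe_subset.2 (filter_subset _ _)))
            (fun S hS => (mem_filter.1 hS).2) (hS₀.2 ▸ h𝒜c S₀ hS₀.1)
      _ = _ := by simpa using (card_filter_mem_and_card_eq_succ x r).symm
  have card_mem_range (S : Finset (Fin c)) : #S ∈ range (c + 1) := by
    simpa [Nat.lt_succ_iff] using card_le_univ S
  calc ∑ S ∈ 𝒜, w S = ∑ k ∈ range (c + 1), ∑ S ∈ 𝒜 with #S = k, w S :=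
        (sum_fiberwise_of_maps_to (fun S _ => card_mem_range S) w).symm
    _ ≤ ∑ k ∈ range (c + 1), ∑ S with x ∈ S ∧ #S = k, w S := sum_le_sum fun k _ => slice k
    _ = ∑ S with x ∈ S, w S := by
        simp_rw [← filter_filter]
        exact sum_fiberwise_of_maps_to (fun S _ => card_mem_range S) w

theorem intersecting_images_card_le_general (n c : ℕ) (hc : 2 * n ≤ c)
    (F : Finset (Fin n → Fin c))
    (hF : ∀ f ∈ F, ∀ g ∈ F, ∃ i j, f i = g j) :
    F.card ≤ n * c ^ (n - 1) := by
  obtain rfl | ⟨f₀, hf₀⟩ := F.eq_empty_or_nonempty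
  · simp
  -- any point `f₀ i₀` of `Fin c` can serve as the centre of the star
  obtain ⟨i₀, -, -⟩ := hF f₀ hf₀ f₀ hf₀
  set 𝒮 := F.image fun f => univ.image f
  have h𝒮 : (𝒮 : Set (Finset (Fin c))).Intersecting := by
    simp only [𝒮, coe_image, Set.forall_mem_image, Set.Intersecting]
    intro f hf g hg
    obtain ⟨i, j, hij⟩ := hF f hf g hg
    exact not_disjoint_iff.2
      ⟨f i, mem_image_of_mem _ (mem_univ i), hij ▸ mem_image_of_mem _ (mem_univ j)⟩
  have h𝒮c : ∀ S ∈ 𝒮, #S ≤ c / 2 := by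
    simp only [𝒮, mem_image]
    rintro _ ⟨f, -, rfl⟩
    have := (card_image_le (s := univ) (f := f)).trans_eq (card_fin n)
    omega
  calc #F = ∑ S ∈ 𝒮, #{f ∈ F | univ.image f = S} := card_eq_sum_card_image _ _
    _ ≤ ∑ S ∈ 𝒮, #{f : Fin n → Fin c | univ.image f = S} :=
        sum_le_sum fun S _ => card_le_card (filter_subset_filter _ (subset_univ F))
    _ ≤ ∑ S with f₀ i₀ ∈ S, #{f : Fin n → Fin c | univ.image f = S} :=
        sum_le_sum_filter_mem_of_intersecting h𝒮 h𝒮c _ (fun _ _ => card_filter_image_eq_congr) _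
    _ = #{f : Fin n → Fin c | f₀ i₀ ∈ univ.image f} := (card_filter_mem_image_eq_sum _).symm
    _ ≤ n * c ^ (n - 1) := by simpa using card_filter_mem_image_le (α := Fin n) (f₀ i₀)

/-- Erdős–Ko–Rado-type bound for functions: if `n ≥ 2`, `c ≥ 2n`, and `F` is a family of
functions `f : Fin n → Fin c` any two of whose images intersect, then `|F| ≤ n·c^(n-1)`. -/
theorem intersecting_images_card_le (n c : ℕ) (hn : 2 ≤ n) (hc : 2 * n ≤ c)
    (F : Finset (Fin n → Fin c))
    (hF : ∀ f ∈ F, ∀ g ∈ F, ∃ i j, f i = g j) :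
    F.card ≤ n * c ^ (n - 1) :=
  intersecting_images_card_le_general n c hc F hF
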